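/- Let (𝒳, ≥_*, π) be a market with π ∈ Π₀(𝒳) and let π^a be the cash additive part of π. Then M₀(π) = M₀(π^a). -/

import Mathlib

open Set Filter

/-- A reflexive and transitive binary relation `≥_*` on real valued functions on `Ω`
satisfying the rationality axioms (i)-(iii) of the paper. -/
structure Rationality (Ω : Type*) where
  ge : (Ω → ℝ) → (Ω → ℝ) → Prop
  refl : ∀ f, ge f f
  trans : ∀ f g h, ge f g → ge g h → ge f h
  /-- axiom (i), first part : `1 >_* 0`. -/
  one_gt_zero : ge 1 0 ∧ ¬ ge 0 1
  /-- axiom (i), second part : pointwise domination implies `≥_*`. -/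
  ge_of_le : ∀ f g : Ω → ℝ, (∀ ω, g ω ≤ f ω) → ge f g
  /-- axiom (ii) : `f ≥_* g` implies `b f + h ≥_* b g + h` for bounded `b ≥ 0`. -/
  affine : ∀ f g b h : Ω → ℝ, ge f g → (∀ ω, 0 ≤ b ω) → (∃ c : ℝ, ∀ ω, b ω ≤ c) →
    ge (fun ω => b ω * f ω + h ω) (fun ω => b ω * g ω + h ω)
  /-- axiom (iii) : `f >_* 0` implies `f ∧ 1 >_* 0`. -/
  trunc : ∀ f : Ω → ℝ, ge f 0 → ¬ ge 0 f →
    ge (fun ω => min (f ω) 1) 0 ∧ ¬ ge 0 (fun ω => min (f ω) 1)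

/-- The asymmetric (strict) part `>_*` of `≥_*`. -/
def Rationality.gt {Ω : Type*} (R : Rationality Ω) (f g : Ω → ℝ) : Prop :=
  R.ge f g ∧ ¬ R.ge g f

/-- A set `A ⊆ Ω` is negligible when `0 ≥_* 1_A`. -/
def Rationality.Negligible {Ω : Type*} (R : Rationality Ω) (A : Set Ω) : Prop :=
  R.ge 0 (A.indicator fun _ => (1 : ℝ))

/-- `𝒳` is a market : a convex set of functions containing `0` and `1`, whose elements are
`≥_*`-bounded below by constants and which is stable under addition of nonnegative constants. -/
structure IsMarket {Ω : Type*} (R : Rationality Ω) (X : Set (Ω → ℝ)) : Prop where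
  convex : ∀ f ∈ X, ∀ g ∈ X, ∀ t : ℝ, 0 ≤ t → t ≤ 1 →
    (fun ω => t * f ω + (1 - t) * g ω) ∈ X
  zero_mem : (0 : Ω → ℝ) ∈ X
  one_mem : (1 : Ω → ℝ) ∈ X
  bddBelow : ∀ f ∈ X, ∃ a : ℝ, R.ge f (fun _ => a)
  add_nonneg_const : ∀ f ∈ X, ∀ lam : ℝ, 0 ≤ lam → (fun ω => f ω + lam) ∈ X

/-- `π ∈ Π₀(𝒳)` : positively homogeneous, subadditive, normalized and `≥_*`-monotone on `X`. -/
structure IsPriceFun0 {Ω : Type*} (R : Rationality Ω) (X : Set (Ω → ℝ))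
    (π : (Ω → ℝ) → ℝ) : Prop where
  posHom : ∀ f ∈ X, ∀ lam : ℝ, 0 < lam → (fun ω => lam * f ω) ∈ X →
    π (fun ω => lam * f ω) = lam * π f
  subadd : ∀ f ∈ X, ∀ g ∈ X, (fun ω => f ω + g ω) ∈ X →
    π (fun ω => f ω + g ω) ≤ π f + π g
  norm_one : π 1 = 1
  mono : ∀ f ∈ X, ∀ g ∈ X, R.ge f g → π g ≤ π f

/-- `π ∈ Π(𝒳)` : a price function, i.e. an element of `Π₀(𝒳)` free of arbitrage. -/
structure IsPriceFun {Ω : Type*} (R : Rationality Ω) (X : Set (Ω → ℝ))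
    (π : (Ω → ℝ) → ℝ) extends IsPriceFun0 R X π : Prop where
  arbFree : ∀ f ∈ X, R.gt f 0 → 0 < π f

/-- Cash additivity of a price `π` on the set `X`. -/
def CashAdditive {Ω : Type*} (X : Set (Ω → ℝ)) (π : (Ω → ℝ) → ℝ) : Prop :=
  ∀ f ∈ X, ∀ a : ℝ, (fun ω => f ω + a) ∈ X → π (fun ω => f ω + a) = π f + a

/-- The cash additive part `π^a` of `π` : `π^a(f) = inf {π(f + t) - t : t ∈ ℝ, f + t ∈ X}`. -/
noncomputable def cashPart {Ω : Type*} (X : Set (Ω → ℝ)) (π : (Ω → ℝ) → ℝ)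
    (f : Ω → ℝ) : ℝ :=
  sInf {y | ∃ t : ℝ, (fun ω => f ω + t) ∈ X ∧ y = π (fun ω => f ω + t) - t}

/-- `L(𝒳)` : the superhedgeable claims `{g : λ X ≥_* |g| for some λ > 0, X ∈ 𝒳}`. -/
def Lspan {Ω : Type*} (R : Rationality Ω) (X : Set (Ω → ℝ)) : Set (Ω → ℝ) :=
  {g | ∃ lam : ℝ, 0 < lam ∧ ∃ f ∈ X, R.ge (fun ω => lam * f ω) (fun ω => |g ω|)}

/-- `𝒞(π) = {g : λ[X - π(X)] ≥_* g for some λ > 0, X ∈ 𝒳}`. -/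
def Cpi {Ω : Type*} (R : Rationality Ω) (X : Set (Ω → ℝ)) (π : (Ω → ℝ) → ℝ) :
    Set (Ω → ℝ) :=
  {g | ∃ lam : ℝ, 0 < lam ∧ ∃ f ∈ X, R.ge (fun ω => lam * (f ω - π f)) g}

/-- Closure in the topology of uniform distance on `𝔉(Ω)`. -/
def uClosure {Ω : Type*} (A : Set (Ω → ℝ)) : Set (Ω → ℝ) :=
  {g | ∀ ε : ℝ, 0 < ε → ∃ h ∈ A, ∀ ω, |g ω - h ω| ≤ ε}

/-- A finitely additive probability defined on the power set of `Ω`. -/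
structure FinAddProb (Ω : Type*) where
  meas : Set Ω → ℝ
  nonneg : ∀ A, 0 ≤ meas A
  total : meas Set.univ = 1
  additive : ∀ A B, Disjoint A B → meas (A ∪ B) = meas A + meas B

/-- Countable additivity of a finitely additive probability. -/
def FinAddProb.CountablyAdditive {Ω : Type*} (m : FinAddProb Ω) : Prop :=
  ∀ A : ℕ → Set Ω, (Pairwise fun i j => Disjoint (A i) (A j)) →
    HasSum (fun n => m.meas (A n)) (m.meas (⋃ n, A n))

/-- Upper tail `∫_0^∞ m(f > t) dt` (with values in `ℝ≥0∞`), used to define the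
finitely additive integral. -/
noncomputable def posTail {Ω : Type*} (m : FinAddProb Ω) (f : Ω → ℝ) : ENNReal :=
  ∫⁻ t in Set.Ioi (0 : ℝ), ENNReal.ofReal (m.meas {ω | t < f ω})

/-- `f ∈ L¹(m)` : both tail integrals are finite. -/
def MemL1 {Ω : Type*} (m : FinAddProb Ω) (f : Ω → ℝ) : Prop :=
  posTail m f ≠ ⊤ ∧ posTail m (fun ω => - f ω) ≠ ⊤

/-- The integral `∫ f dm` with respect to a finitely additive probability. -/
noncomputable def faIntegral {Ω : Type*} (m : FinAddProb Ω) (f : Ω → ℝ) : ℝ :=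
  (posTail m f).toReal - (posTail m (fun ω => - f ω)).toReal

/-- Closure of `A` with respect to the `L¹(m)` distance. -/
def L1Closure {Ω : Type*} (m : FinAddProb Ω) (A : Set (Ω → ℝ)) : Set (Ω → ℝ) :=
  {g | ∀ ε : ℝ, 0 < ε → ∃ h ∈ A, MemL1 m (fun ω => g ω - h ω) ∧
    faIntegral m (fun ω => |g ω - h ω|) ≤ ε}

/-- The set `M₀(π)` of pricing measures. -/
def M0 {Ω : Type*} (R : Rationality Ω) (X : Set (Ω → ℝ)) (π : (Ω → ℝ) → ℝ) :
    Set (FinAddProb Ω) :=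
  {m | (∀ g ∈ Lspan R X, MemL1 m g) ∧ ∀ f ∈ X, faIntegral m f ≤ π f}

/-- The set `M(π)` of strictly positive pricing measures :
those `m ∈ M₀(π)` with `∫ (f ∧ 1) dm > 0` whenever `f >_* 0`. -/
def Mstrict {Ω : Type*} (R : Rationality Ω) (X : Set (Ω → ℝ)) (π : (Ω → ℝ) → ℝ) :
    Set (FinAddProb Ω) :=
  {m | m ∈ M0 R X π ∧ ∀ f : Ω → ℝ, R.gt f 0 → 0 < faIntegral m (fun ω => min (f ω) 1)}

/-- The set `M(π; Y)` : elements of `M₀(π)` with `∫ (f ∧ 1) dm > 0` for `f ∈ Y`, `f >_* 0`. -/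
def MstrictOn {Ω : Type*} (R : Rationality Ω) (X : Set (Ω → ℝ)) (π : (Ω → ℝ) → ℝ)
    (Y : Set (Ω → ℝ)) : Set (FinAddProb Ω) :=
  {m | m ∈ M0 R X π ∧ ∀ f ∈ Y, R.gt f 0 → 0 < faIntegral m (fun ω => min (f ω) 1)}

/-- `𝒳₁ = {X ∧ k : X ∈ 𝒳, k ∈ ℝ₊ ∪ {+∞}}` (`k = +∞` yielding `X` itself). -/
def X1 {Ω : Type*} (X : Set (Ω → ℝ)) : Set (Ω → ℝ) :=
  {g | ∃ f ∈ X, g = f ∨ ∃ k : ℝ, 0 ≤ k ∧ g = fun ω => min (f ω) k}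

/-- The market power `𝓂(ρ)` : the supremum of
`[Σ ρ(fᵢ) - ρ(Σ fᵢ)] / Σ ρ(fᵢ)` over finite families of nonnegative bounded functions
(with the convention `0/0 = 0`, automatic in Lean). -/
noncomputable def marketPower {Ω : Type*} (ρ : (Ω → ℝ) → ℝ) : ℝ :=
  sSup {r | ∃ (N : ℕ) (f : Fin N → Ω → ℝ),
    (∀ i, ∀ ω, 0 ≤ f i ω) ∧ (∀ i, ∃ c : ℝ, ∀ ω, f i ω ≤ c) ∧
    r = ((∑ i, ρ (f i)) - ρ (fun ω => ∑ i, f i ω)) / (∑ i, ρ (f i))}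

/-- The relative market power `𝓂(ρ; Y)`, the supremum being restricted to finite families
of nonnegative bounded functions belonging to `Y`. -/
noncomputable def marketPowerOn {Ω : Type*} (Y : Set (Ω → ℝ)) (ρ : (Ω → ℝ) → ℝ) : ℝ :=
  sSup {r | ∃ (N : ℕ) (f : Fin N → Ω → ℝ), (∀ i, f i ∈ Y) ∧
    (∀ i, ∀ ω, 0 ≤ f i ω) ∧ (∀ i, ∃ c : ℝ, ∀ ω, f i ω ≤ c) ∧
    r = ((∑ i, ρ (f i)) - ρ (fun ω => ∑ i, f i ω)) / (∑ i, ρ (f i))}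

/-- A sequence of nonnegative bounded functions whose sum is bounded. -/
def GoodSeq {Ω : Type*} (f : ℕ → Ω → ℝ) : Prop :=
  (∀ n, ∀ ω, 0 ≤ f n ω) ∧ (∀ n, ∃ c : ℝ, ∀ ω, f n ω ≤ c) ∧
  (∃ c : ℝ, ∀ ω, ∀ k : ℕ, (∑ n ∈ Finset.range k, f n ω) ≤ c)

/-- The pointwise sum `Σₙ fₙ`. -/
noncomputable def seqSum {Ω : Type*} (f : ℕ → Ω → ℝ) : Ω → ℝ :=
  fun ω => ∑' n, f n ω

/-- The ratio `[Σ_{n ≤ k} ρ(fₙ) - ρ(Σₙ fₙ)] / Σ_{n ≤ k} ρ(fₙ)`. -/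
noncomputable def mcRatioSeq {Ω : Type*} (ρ : (Ω → ℝ) → ℝ) (f : ℕ → Ω → ℝ) (k : ℕ) : ℝ :=
  ((∑ n ∈ Finset.range (k + 1), ρ (f n)) - ρ (seqSum f)) /
    (∑ n ∈ Finset.range (k + 1), ρ (f n))

/-- `𝓂_c(ρ; f₁, f₂, …)` : the limit as `k → ∞` of the above ratios (as an extended real,
computed as a `limsup`, which coincides with the limit whenever the latter exists). -/
noncomputable def mcVal {Ω : Type*} (ρ : (Ω → ℝ) → ℝ) (f : ℕ → Ω → ℝ) : EReal :=
  Filter.limsup (fun k => ((mcRatioSeq ρ f k : ℝ) : EReal)) Filter.atTop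

/-- `𝓂_c(ρ)` : the supremum of `𝓂_c(ρ; f₁, f₂, …)` over all admissible sequences. -/
noncomputable def mcSup {Ω : Type*} (ρ : (Ω → ℝ) → ℝ) : EReal :=
  sSup {v | ∃ f : ℕ → Ω → ℝ, GoodSeq f ∧ v = mcVal ρ f}

/-- `𝓃_c(ρ)` : minus the infimum of `𝓂_c(ρ; f₁, f₂, …)` over all admissible sequences. -/
noncomputable def ncVal {Ω : Type*} (ρ : (Ω → ℝ) → ℝ) : EReal :=
  - sInf {v | ∃ f : ℕ → Ω → ℝ, GoodSeq f ∧ v = mcVal ρ f}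

/-- The set `B(Ω)` of bounded functions. -/
def BddFun (Ω : Type*) : Set (Ω → ℝ) :=
  {f | ∃ c : ℝ, ∀ ω, |f ω| ≤ c}

/-- `P` represents `≥_*` : `f ≥_* h` iff `inf_{ε > 0} P(f > h - ε) = 1`. -/
def Represents {Ω : Type*} (P : FinAddProb Ω) (R : Rationality Ω) : Prop :=
  ∀ f h : Ω → ℝ,
    R.ge f h ↔ sInf {x | ∃ ε : ℝ, 0 < ε ∧ x = P.meas {ω | h ω - ε < f ω}} = 1

/-- The robustness property (4d) : `f + ε >_* 0` for all `ε > 0` implies `f ≥_* 0`. -/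
def Robust {Ω : Type*} (R : Rationality Ω) : Prop :=
  ∀ f : Ω → ℝ, (∀ ε : ℝ, 0 < ε → R.gt (fun ω => f ω + ε) 0) → R.ge f 0

/-! Since `π^a ≤ π` on `𝒳`, `M₀(π^a) ⊆ M₀(π)`. Conversely, for `m ∈ M₀(π)` every `X ∈ 𝒳` is
`m`-integrable and `∫ (X + t) dm = ∫ X dm + t`, so `∫ X dm ≤ π(X + t) - t` for every admissible
`t`, i.e. `∫ X dm ≤ π^a(X)`. Writing `∫` through the tails `u ↦ m(f > u)` and `u ↦ m(f < u)`,
the translation identity reduces to `m(f > u) + m(f < u) = 1` for almost every `u`. -/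

namespace FinAddProb

open MeasureTheory
open scoped ENNReal

variable {Ω : Type*} (m : FinAddProb Ω)

lemma meas_mono {A B : Set Ω} (h : A ⊆ B) : m.meas A ≤ m.meas B := by
  have hD : Disjoint A (B \ A) := disjoint_sdiff_right
  calc m.meas A ≤ m.meas A + m.meas (B \ A) := le_add_of_nonneg_right (m.nonneg _)
    _ = m.meas B := by rw [← m.additive _ _ hD, union_sdiff_cancel h]

lemma meas_add_meas_compl (A : Set Ω) : m.meas A + m.meas Aᶜ = 1 := by
  rw [← m.additive A Aᶜ disjoint_compl_right, union_compl_self, m.total]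

lemma antitone_meas_lt (f : Ω → ℝ) : Antitone fun u => m.meas {ω | u < f ω} :=
  fun _ _ huv => m.meas_mono fun _ hω => huv.trans_lt hω

lemma monotone_meas_gt (f : Ω → ℝ) : Monotone fun u => m.meas {ω | f ω < u} :=
  fun _ _ huv => m.meas_mono fun _ hω => hω.trans_le huv

/-- `m{f = u} = 0` off the countably many jumps of the antitone function `u ↦ m{f > u}`. -/
lemma ae_meas_gt_add_meas_lt_eq_one (f : Ω → ℝ) :
    ∀ᵐ u, m.meas {ω | f ω < u} + m.meas {ω | u < f ω} = 1 := by
  filter_upwards [(m.antitone_meas_lt f).countable_not_continuousAt.ae_notMem volume] with u hu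
  have hcont : ContinuousAt (fun u => m.meas {ω | u < f ω}) u := not_not.1 hu
  have hge : m.meas {ω | u ≤ f ω} ≤ m.meas {ω | u < f ω} := by
    refine ge_of_tendsto (hcont.tendsto.mono_left (nhdsWithin_le_nhds (s := Iio u))) ?_
    filter_upwards [self_mem_nhdsWithin (s := Iio u)] with v (hv : v < u)
    exact m.meas_mono fun ω (hω : u ≤ f ω) => hv.trans_le hω
  have hle : m.meas {ω | u < f ω} ≤ m.meas {ω | u ≤ f ω} :=
    m.meas_mono fun ω (hω : u < f ω) => hω.le
  have hcompl : {ω | u ≤ f ω} = {ω | f ω < u}ᶜ := by ext; simp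
  have := m.meas_add_meas_compl {ω | f ω < u}
  rw [← hcompl] at this
  linarith

noncomputable def upperTail (f : Ω → ℝ) (c : ℝ) : ℝ≥0∞ :=
  ∫⁻ u in Ioi c, ENNReal.ofReal (m.meas {ω | u < f ω})

noncomputable def lowerTail (f : Ω → ℝ) (c : ℝ) : ℝ≥0∞ :=
  ∫⁻ u in Iio c, ENNReal.ofReal (m.meas {ω | f ω < u})

lemma posTail_add_const (f : Ω → ℝ) (t : ℝ) :
    posTail m (fun ω => f ω + t) = m.upperTail f (-t) := by
  have hpre : (fun u => u + -t) ⁻¹' Ioi (-t) = Ioi 0 := by ext; simp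
  rw [upperTail, ← (measurePreserving_add_right volume (-t)).setLIntegral_comp_preimage
    measurableSet_Ioi (m.antitone_meas_lt f).measurable.ennreal_ofReal, hpre, posTail]
  congr! 4 with u
  ext ω
  simp only [mem_ofPred_eq]
  constructor <;> intro h <;> linarith

lemma posTail_neg_add_const (f : Ω → ℝ) (t : ℝ) :
    posTail m (fun ω => -(f ω + t)) = m.lowerTail f (-t) := by
  have hpre : (fun u => -(u + t)) ⁻¹' Iio (-t) = Ioi 0 := by ext; simp
  rw [lowerTail, ← ((Measure.measurePreserving_neg volume).comp
    (measurePreserving_add_right volume t)).setLIntegral_comp_preimage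
    measurableSet_Iio (m.monotone_meas_gt f).measurable.ennreal_ofReal]
  simp only [Function.comp_def]
  rw [hpre, posTail]
  congr! 4 with u
  ext ω
  simp only [mem_ofPred_eq]
  constructor <;> intro h <;> linarith

lemma upperTail_eq_add {a b : ℝ} (hab : a ≤ b) (f : Ω → ℝ) :
    m.upperTail f a
      = (∫⁻ u in Ioc a b, ENNReal.ofReal (m.meas {ω | u < f ω})) + m.upperTail f b := by
  rw [upperTail, upperTail, ← Ioc_union_Ioi_eq_Ioi hab,
    lintegral_union measurableSet_Ioi Ioc_disjoint_Ioi_same]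

lemma lowerTail_eq_add {a b : ℝ} (hab : a ≤ b) (f : Ω → ℝ) :
    m.lowerTail f b
      = m.lowerTail f a + ∫⁻ u in Ioc a b, ENNReal.ofReal (m.meas {ω | f ω < u}) := by
  rw [lowerTail, lowerTail, ← Iio_union_Ico_eq_Iio hab,
    lintegral_union measurableSet_Ico (Iio_disjoint_Ici le_rfl |>.mono_right Ico_subset_Ici_self),
    restrict_Ico_eq_restrict_Ioc]

lemma lintegral_Ioc_meas_lt_add_meas_gt (a b : ℝ) (f : Ω → ℝ) :
    (∫⁻ u in Ioc a b, ENNReal.ofReal (m.meas {ω | u < f ω}))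
      + ∫⁻ u in Ioc a b, ENNReal.ofReal (m.meas {ω | f ω < u}) = ENNReal.ofReal (b - a) := by
  rw [← lintegral_add_left (m.antitone_meas_lt f).measurable.ennreal_ofReal,
    ← Real.volume_Ioc, ← setLIntegral_one]
  refine lintegral_congr_ae (ae_restrict_of_ae ?_)
  filter_upwards [m.ae_meas_gt_add_meas_lt_eq_one f] with u hu
  rw [← ENNReal.ofReal_add (m.nonneg _) (m.nonneg _), add_comm, hu, ENNReal.ofReal_one]

lemma upperTail_toReal_sub_lowerTail_toReal {a b : ℝ} (hab : a ≤ b) (f : Ω → ℝ)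
    (hu : m.upperTail f b ≠ ⊤) (hl : m.lowerTail f a ≠ ⊤) :
    (m.upperTail f a).toReal - (m.lowerTail f a).toReal
      = (m.upperTail f b).toReal - (m.lowerTail f b).toReal + (b - a) := by
  have hsum := m.lintegral_Ioc_meas_lt_add_meas_gt a b f
  set A := ∫⁻ u in Ioc a b, ENNReal.ofReal (m.meas {ω | u < f ω})
  set B := ∫⁻ u in Ioc a b, ENNReal.ofReal (m.meas {ω | f ω < u})
  have hA : A ≠ ⊤ := ne_top_of_le_ne_top ENNReal.ofReal_ne_top (hsum ▸ le_self_add)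
  have hB : B ≠ ⊤ := ne_top_of_le_ne_top ENNReal.ofReal_ne_top (hsum ▸ le_add_self)
  have hAB : A.toReal + B.toReal = b - a := by
    rw [← ENNReal.toReal_add hA hB, hsum, ENNReal.toReal_ofReal (sub_nonneg.2 hab)]
  rw [m.upperTail_eq_add hab, m.lowerTail_eq_add hab, ENNReal.toReal_add hA hu,
    ENNReal.toReal_add hl hB]
  linarith

lemma faIntegral_add_const_eq_tails (f : Ω → ℝ) (t : ℝ) :
    faIntegral m (fun ω => f ω + t)
      = (m.upperTail f (-t)).toReal - (m.lowerTail f (-t)).toReal := by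
  rw [faIntegral, posTail_add_const, posTail_neg_add_const]

lemma faIntegral_eq_tails (f : Ω → ℝ) :
    faIntegral m f = (m.upperTail f 0).toReal - (m.lowerTail f 0).toReal := by
  simpa using m.faIntegral_add_const_eq_tails f 0

lemma memL1_iff_tails (f : Ω → ℝ) :
    MemL1 m f ↔ m.upperTail f 0 ≠ ⊤ ∧ m.lowerTail f 0 ≠ ⊤ := by
  have hupper := m.posTail_add_const f 0
  have hlower := m.posTail_neg_add_const f 0
  simp only [add_zero, neg_zero] at hupper hlower
  rw [MemL1, hupper, hlower]

theorem faIntegral_add_const {f : Ω → ℝ} (hf : MemL1 m f) (t : ℝ) :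
    faIntegral m (fun ω => f ω + t) = faIntegral m f + t := by
  obtain ⟨hu, hl⟩ := (m.memL1_iff_tails f).1 hf
  rw [m.faIntegral_add_const_eq_tails, m.faIntegral_eq_tails]
  rcases le_total 0 t with ht | ht
  · have hl' : m.lowerTail f (-t) ≠ ⊤ :=
      ne_top_of_le_ne_top hl (lintegral_mono_set (Iio_subset_Iio (neg_nonpos.2 ht)))
    rw [m.upperTail_toReal_sub_lowerTail_toReal (neg_nonpos.2 ht) f hu hl']
    ring
  · have hu' : m.upperTail f (-t) ≠ ⊤ :=
      ne_top_of_le_ne_top hu (lintegral_mono_set (Ioi_subset_Ioi (neg_nonneg.2 ht)))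
    rw [m.upperTail_toReal_sub_lowerTail_toReal (neg_nonneg.2 ht) f hu' hl]
    ring

end FinAddProb

section Market

variable {Ω : Type*} {R : Rationality Ω} {X : Set (Ω → ℝ)} {π : (Ω → ℝ) → ℝ}

lemma Rationality.ge_add_const (R : Rationality Ω) {f g : Ω → ℝ} (h : R.ge f g) (t : ℝ) :
    R.ge (fun ω => f ω + t) (fun ω => g ω + t) := by
  simpa using R.affine f g 1 (fun _ => t) h (fun _ => zero_le_one) ⟨1, fun _ => le_rfl⟩

lemma IsMarket.const_mem (hM : IsMarket R X) {c : ℝ} (hc : 0 ≤ c) : (fun _ : Ω => c) ∈ X := by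
  simpa using hM.add_nonneg_const 0 hM.zero_mem c hc

lemma IsMarket.subset_Lspan (hM : IsMarket R X) : X ⊆ Lspan R X := by
  intro f hf
  obtain ⟨a, ha⟩ := hM.bddBelow f hf
  set c := |2 * a|
  set b : Ω → ℝ := fun ω => if f ω < 0 then 2 else 0
  refine ⟨1, one_pos, fun ω => f ω + c, hM.add_nonneg_const f hf c (abs_nonneg _), ?_⟩
  -- axiom (ii) with `b = 2 • 1_{f < 0}` gives `f + c ≥_* f + c + b (a - f)`, which dominates `|f|`
  have key := R.affine f (fun _ => a) b (fun ω => f ω + c - b ω * f ω) ha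
    (fun ω => by dsimp only [b]; split_ifs <;> norm_num)
    ⟨2, fun ω => by dsimp only [b]; split_ifs <;> norm_num⟩
  refine R.trans _ (fun ω => b ω * a + (f ω + c - b ω * f ω)) _ ?_
    (R.ge_of_le _ (fun ω => |f ω|) fun ω => ?_)
  · convert key using 2 with ω
    ring
  · by_cases hω : f ω < 0
    · simp only [b, if_pos hω, abs_of_neg hω]
      linarith [neg_abs_le (2 * a)]
    · simp only [b, if_neg hω, abs_of_nonneg (not_lt.1 hω)]
      linarith [abs_nonneg (2 * a)]

lemma IsPriceFun0.map_const (hπ : IsPriceFun0 R X π) (hM : IsMarket R X) {c : ℝ} (hc : 0 < c) :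
    π (fun _ => c) = c := by
  simpa [hπ.norm_one] using hπ.posHom 1 hM.one_mem c hc (by simpa using hM.const_mem hc.le)

lemma IsPriceFun0.le_of_ge_const (hπ : IsPriceFun0 R X π) (hM : IsMarket R X) {g : Ω → ℝ}
    (hg : g ∈ X) {c : ℝ} (hc : R.ge g (fun _ => c)) : c ≤ π g := by
  set s := |c| + 1
  have hs : 0 < s := by positivity
  have hcs : 0 < c + s := by linarith [neg_abs_le c]
  have hgs : (fun ω => g ω + s) ∈ X := hM.add_nonneg_const g hg s hs.le
  have hmono := hπ.mono _ hgs _ (hM.const_mem hcs.le) (R.ge_add_const hc s)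
  have hsub := hπ.subadd g hg _ (hM.const_mem hs.le) hgs
  rw [hπ.map_const hM hcs] at hmono
  rw [hπ.map_const hM hs] at hsub
  linarith

lemma le_cashPart {f : Ω → ℝ} (hf : f ∈ X) {y : ℝ}
    (h : ∀ t, (fun ω => f ω + t) ∈ X → y ≤ π (fun ω => f ω + t) - t) : y ≤ cashPart X π f :=
  le_csInf ⟨π f, 0, by simpa using hf, by simp⟩ fun _ ⟨t, ht, hy⟩ => hy ▸ h t ht

lemma cashPart_le (hM : IsMarket R X) (hπ : IsPriceFun0 R X π) {f : Ω → ℝ} (hf : f ∈ X) :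
    cashPart X π f ≤ π f := by
  obtain ⟨a, ha⟩ := hM.bddBelow f hf
  refine csInf_le ⟨a, ?_⟩ ⟨0, by simpa using hf, by simp⟩
  rintro _ ⟨t, ht, rfl⟩
  have := hπ.le_of_ge_const hM ht (R.ge_add_const ha t)
  linarith

end Market

/-- `M₀(π) = M₀(π^a)` where `π^a` is the cash additive part of `π`. -/
theorem M0_cashPart {Ω : Type*} (R : Rationality Ω) (X : Set (Ω → ℝ)) (π : (Ω → ℝ) → ℝ)
    (hM : IsMarket R X) (hπ : IsPriceFun0 R X π) :
    M0 R X π = M0 R X (cashPart X π) := by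
  ext m
  constructor
  · rintro ⟨hL1, hle⟩
    refine ⟨hL1, fun f hf => le_cashPart hf fun t ht => ?_⟩
    have := hle _ ht
    rw [m.faIntegral_add_const (hL1 f (hM.subset_Lspan hf))] at this
    linarith
  · rintro ⟨hL1, hle⟩
    exact ⟨hL1, fun f hf => (hle f hf).trans (cashPart_le hM hπ hf)⟩
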